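/- Let G be a finite group of order ℓ with conjugacy classes C₁,…,Cₙ and irreducible complex characters χ₁,…,χₙ. Define p_{i₁,…,i_r} to be the number of tuples (r,s,g_{i₁},…,g_{i_r}) with r,s ∈ G, g_{i_t} ∈ C_{i_t}, and s⁻¹r⁻¹sr = g_{i₁}⋯g_{i_r}. Then p_{i₁,…,i_r} = ℓ·∑_{l=1}^{n} (ℓ_{i₁}χ_l(g_{i₁})/χ_l(1))·⋯·(ℓ_{i_r}χ_l(g_{i_r})/χ_l(1)) = ℓ·Tr(A_{i₁}⋯A_{i_r}), where A_j is the structure-constant matrix of the class sum Ĉⱼ. -/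

import Mathlib

/-!
Let `P = Ĉ_{i₁} ⋯ Ĉ_{i_r}`. The coefficient of `g` in `P` counts the tuples of
`C_{i₁} × ⋯ × C_{i_r}` with product `g`, so the count is `∑_{r,s} P(s⁻¹r⁻¹sr)`. For fixed `r`, the
conjugate `s⁻¹r⁻¹s` runs `|C_G(r)|` times over the class of `r⁻¹`, so the inner sum is
`|C_G(r)| (Ĉ P)(r)` with `Ĉ` the class sum of `r`. As `P` is central this is a class function of
`r`, and summing over `G` gives `|G| ∑_k (Ĉ_k P)(g_k) = |G| Tr(A_{i₁} ⋯ A_{i_r})`, the trace of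
multiplication by `P` on `Z(ℂG)` in the basis of class sums.

By Schur's lemma a class sum acts on an irreducible `V_l` by the scalar
`ω_l(Ĉ_k) = ℓ_k χ_l(g_k) / χ_l(1)`, and `ω_l` is multiplicative on `Z(ℂG)`. Hence the matrix
`W = (ω_l(Ĉ_k))_{l,k}` satisfies `W A_j = diag(ω_l(Ĉ_j)) W`; row orthogonality makes `W`
invertible, so `Tr(A_{i₁} ⋯ A_{i_r}) = ∑_l ∏_t ω_l(Ĉ_{i_t})`.
-/

open scoped Classical

/-- The class sum of the conjugacy class of `x` in the group algebra `ℂ[G]`. -/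
noncomputable def classSum (G : Type) [Group G] [Fintype G] (x : G) : MonoidAlgebra ℂ G :=
  ∑ g : G, if IsConj x g then MonoidAlgebra.single g (1 : ℂ) else 0

open Finset CategoryTheory

namespace MonoidAlgebra
variable {k M G : Type*}

theorem list_prod_ofFn_eq_sum [CommSemiring k] [Monoid M] [Fintype M] {r : ℕ}
    (a : Fin r → MonoidAlgebra k M) :
    (List.ofFn a).prod = ∑ f : Fin r → M, single (List.ofFn f).prod (∏ t, (a t).coeff (f t)) := by
  induction r with
  | zero => simp [one_def]
  | succ r ih =>
    have h0 : a 0 = ∑ u : M, single u ((a 0).coeff u) := by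
      rw [← Finsupp.sum_fintype _ _ fun _ => single_zero _, sum_coeff_single]
    rw [List.ofFn_succ, List.prod_cons, ih, h0, sum_mul_sum, ← Fintype.sum_prod_type',
      ← (Fin.consEquiv fun _ => M).sum_comp]
    refine Fintype.sum_congr _ _ fun ⟨u, f⟩ => ?_
    simp [single_mul_single, List.ofFn_succ, Fin.prod_univ_succ, Fin.consEquiv]

theorem mem_center_iff_coeff_conj [CommSemiring k] [Group G] {z : MonoidAlgebra k G} :
    z ∈ Subsemiring.center (MonoidAlgebra k G) ↔ ∀ c g, z.coeff (c * g * c⁻¹) = z.coeff g := by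
  rw [Subsemiring.mem_center_iff]
  constructor
  · intro hz c g
    simpa using (congrArg (fun w => w.coeff (c * g)) (hz (single c 1))).symm
  · intro hz w
    induction w using MonoidAlgebra.induction_linear with
    | zero => simp
    | add w w' hw hw' => rw [add_mul, mul_add, hw, hw']
    | single c r =>
      ext g
      rw [coeff_single_mul_apply, coeff_mul_single_apply, ← hz c, mul_inv_cancel_left, mul_comm]

end MonoidAlgebra

theorem SemiconjBy.list_prod_ofFn {M : Type*} [Monoid M] {a : M} {r : ℕ} {f g : Fin r → M}
    (h : ∀ t, SemiconjBy a (f t) (g t)) : SemiconjBy a (List.ofFn f).prod (List.ofFn g).prod := by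
  induction r with
  | zero => exact SemiconjBy.one_right a
  | succ r ih =>
    simpa only [List.ofFn_succ, List.prod_cons] using (h 0).mul_right (ih fun t => h t.succ)

theorem Matrix.trace_eq_of_semiconjBy {n R : Type*} [Fintype n] [DecidableEq n] [CommSemiring R]
    {W M D : Matrix n n R} (hW : IsUnit W) (h : SemiconjBy W M D) : M.trace = D.trace := by
  obtain ⟨u, rfl⟩ := hW
  rw [(Units.eq_inv_mul_iff_mul_eq (b := u)).mpr h.eq, ← mul_assoc, trace_units_conj']

theorem Matrix.list_prod_ofFn_diagonal {n R : Type*} [Fintype n] [DecidableEq n] [CommSemiring R]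
    {r : ℕ} (d : Fin r → n → R) :
    (List.ofFn fun t => diagonal (d t)).prod = diagonal fun l => ∏ t, d t l := by
  simpa [List.map_ofFn, List.prod_ofFn, Function.comp_def, Finset.prod_fn] using
    (map_list_prod (diagonalRingHom n R) (List.ofFn d)).symm

/-- Since the `e i` commute, the matrices of the factors multiply in the order of the factors. -/
theorem list_prod_ofFn_mul_eq_sum_smul {K R ι : Type*} [CommSemiring K] [Semiring R]
    [Algebra K R] [Fintype ι] [DecidableEq ι] {e : ι → R} (hcomm : ∀ i j, Commute (e i) (e j))
    {a : ι → ι → ι → K} (ha : ∀ i j, e i * e j = ∑ l, a l i j • e l) {r : ℕ} (i : Fin r → ι)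
    (k : ι) :
    (List.ofFn fun t => e (i t)).prod * e k =
      ∑ m, (List.ofFn fun t => Matrix.of fun p q => a p q (i t)).prod m k • e m := by
  induction r with
  | zero => simp [Matrix.one_apply]
  | succ r ih =>
    simp only [List.ofFn_succ, List.prod_cons, mul_assoc, ih, mul_sum, mul_smul_comm,
      (hcomm (i 0) _).eq, ha, smul_sum, smul_smul, Matrix.mul_apply, Matrix.of_apply, sum_smul]
    rw [sum_comm]
    simp only [mul_comm]

section Conjugation
variable {G : Type*} [Group G] [Fintype G]

theorem card_isConj_smul_sum_conj {M : Type*} [AddCommMonoid M] (r : G) (h : G → M) :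
    Nat.card {t // IsConj r t} • ∑ s, h (s * r * s⁻¹) =
      Fintype.card G • ∑ t with IsConj r t, h t := by
  have hperm : ∀ s, ∑ t with IsConj r t, h (s * t * s⁻¹) = ∑ t with IsConj r t, h t := fun s =>
    sum_nbij' (fun t => s * t * s⁻¹) (fun t => s⁻¹ * t * s)
      (fun t ht => by simpa using (mem_filter.mp ht).2.trans (isConj_iff.mpr ⟨s, rfl⟩))
      (fun t ht => by simpa using (mem_filter.mp ht).2.trans (isConj_iff.mpr ⟨s⁻¹, rfl⟩))
      (fun t _ => by group) (fun t _ => by group) fun _ _ => rfl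
  have hconst : ∀ t, IsConj r t → ∑ s, h (s * t * s⁻¹) = ∑ s, h (s * r * s⁻¹) := by
    intro t ht
    obtain ⟨c, rfl⟩ := isConj_iff.mp ht
    exact Fintype.sum_equiv (Equiv.mulRight c) _ _ fun s => by simp [mul_assoc]
  calc Nat.card {t // IsConj r t} • ∑ s, h (s * r * s⁻¹)
      = ∑ t with IsConj r t, ∑ s, h (s * t * s⁻¹) := by
        rw [sum_congr rfl fun t ht => hconst t (mem_filter.mp ht).2, sum_const,
          Nat.card_eq_fintype_card, Fintype.card_subtype]
    _ = ∑ s : G, ∑ t with IsConj r t, h (s * t * s⁻¹) := sum_comm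
    _ = Fintype.card G • ∑ t with IsConj r t, h t := by
        rw [Fintype.sum_congr _ _ hperm, sum_const, card_univ]

theorem sum_eq_sum_card_smul_of_conj {n : ℕ} {x : Fin n → G}
    (hdist : ∀ i j, i ≠ j → ¬ IsConj (x i) (x j)) (hexh : ∀ g, ∃ i, IsConj (x i) g)
    {M : Type*} [AddCommMonoid M] (f : G → M) (hf : ∀ c g, f (c * g * c⁻¹) = f g) :
    ∑ g, f g = ∑ k, Nat.card {y // IsConj (x k) y} • f (x k) := by
  have hunique : ∀ g, ∑ k, (if IsConj (x k) g then f g else 0) = f g := fun g => by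
    obtain ⟨k, hk⟩ := hexh g
    rw [sum_eq_single k (fun j _ hj => if_neg fun hj' => hdist j k hj (hj'.trans hk.symm))
      (by simp), if_pos hk]
  have hconst : ∀ k g, IsConj (x k) g → f g = f (x k) := fun k g h => by
    obtain ⟨c, rfl⟩ := isConj_iff.mp h
    exact hf c (x k)
  calc ∑ g, f g = ∑ k, ∑ g with IsConj (x k) g, f g := by
        simp only [sum_filter]
        rw [sum_comm]
        exact Fintype.sum_congr _ _ fun g => (hunique g).symm
    _ = ∑ k, Nat.card {y // IsConj (x k) y} • f (x k) := by
        refine Fintype.sum_congr _ _ fun k => ?_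
        rw [sum_congr rfl fun g hg => hconst k g (mem_filter.mp hg).2, sum_const,
          Nat.card_eq_fintype_card, Fintype.card_subtype]

end Conjugation

section ClassSum
open MonoidAlgebra
variable {G : Type} [Group G] [Fintype G]

theorem classSum_eq_sum_filter (y : G) : classSum G y = ∑ g with IsConj y g, single g 1 :=
  (sum_filter _ _).symm

theorem coeff_classSum (y g : G) : (classSum G y).coeff g = if IsConj y g then 1 else 0 := by
  simp [classSum_eq_sum_filter, coeff_sum, Finsupp.single_apply]

theorem coeff_classSum_mul (y g : G) (P : MonoidAlgebra ℂ G) :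
    (classSum G y * P).coeff g = ∑ t with IsConj y t, P.coeff (t⁻¹ * g) := by
  simp [classSum_eq_sum_filter, sum_mul, coeff_sum]

theorem classSum_mem_center (y : G) : classSum G y ∈ Subsemiring.center (MonoidAlgebra ℂ G) := by
  refine mem_center_iff_coeff_conj.mpr fun c g => ?_
  have hg : IsConj g (c * g * c⁻¹) := isConj_iff.mpr ⟨c, rfl⟩
  simp only [coeff_classSum, (⟨fun h => h.trans hg.symm, fun h => h.trans hg⟩ :
    IsConj y (c * g * c⁻¹) ↔ IsConj y g)]

theorem coeff_sum_smul_classSum {n : ℕ} {x : Fin n → G}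
    (hdist : ∀ i j, i ≠ j → ¬ IsConj (x i) (x j)) (c : Fin n → ℂ) (m : Fin n) :
    (∑ l, c l • classSum G (x l)).coeff (x m) = c m := by
  rw [coeff_sum, Finsupp.finsetSum_apply, sum_eq_single m]
  · rw [coeff_smul_apply, coeff_classSum, if_pos (IsConj.refl _), smul_eq_mul, mul_one]
  · intro l _ hl
    rw [coeff_smul_apply, coeff_classSum, if_neg (hdist l m hl), smul_zero]
  · simp

theorem coeff_list_prod_classSum {r : ℕ} (y : Fin r → G) (c : G) :
    (List.ofFn fun t => classSum G (y t)).prod.coeff c =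
      #{f : Fin r → G | (∀ t, IsConj (y t) (f t)) ∧ (List.ofFn f).prod = c} := by
  rw [list_prod_ofFn_eq_sum, coeff_sum, Finsupp.finsetSum_apply, natCast_card_filter]
  refine Fintype.sum_congr _ _ fun f => ?_
  simp only [coeff_single, Finsupp.single_apply, coeff_classSum, prod_boole, mem_univ,
    true_implies, ← ite_and, and_comm]

theorem natCard_commutator_eq_sum_coeff {r : ℕ} (y : Fin r → G) :
    (Nat.card {t : G × G × (Fin r → G) // (∀ j, IsConj (y j) (t.2.2 j)) ∧
        t.2.1⁻¹ * t.1⁻¹ * t.2.1 * t.1 = (List.ofFn t.2.2).prod} : ℂ) =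
      ∑ r, ∑ s, (List.ofFn fun t => classSum G (y t)).prod.coeff (s⁻¹ * r⁻¹ * s * r) := by
  simp only [coeff_list_prod_classSum, natCast_card_filter, Nat.card_eq_fintype_card,
    Fintype.card_subtype, Fintype.sum_prod_type, eq_comm]

theorem card_isConj_mul_sum_coeff_commutator (P : MonoidAlgebra ℂ G) (r : G) :
    (Nat.card {t // IsConj r t} : ℂ) * ∑ s, P.coeff (s⁻¹ * r⁻¹ * s * r) =
      Fintype.card G * (classSum G r * P).coeff r := by
  have hinv : ∑ s, P.coeff (s⁻¹ * r⁻¹ * s * r) = ∑ s, P.coeff ((s * r * s⁻¹)⁻¹ * r) :=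
    Fintype.sum_equiv (Equiv.inv G) _ _ fun s => by simp [mul_assoc]
  rw [hinv, ← nsmul_eq_mul, card_isConj_smul_sum_conj r fun t => P.coeff (t⁻¹ * r),
    coeff_classSum_mul, nsmul_eq_mul]

theorem sum_sum_coeff_commutator {n : ℕ} {x : Fin n → G}
    (hdist : ∀ i j, i ≠ j → ¬ IsConj (x i) (x j)) (hexh : ∀ g, ∃ i, IsConj (x i) g)
    {P : MonoidAlgebra ℂ G} (hP : P ∈ Subsemiring.center (MonoidAlgebra ℂ G)) :
    ∑ r, ∑ s, P.coeff (s⁻¹ * r⁻¹ * s * r) =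
      Fintype.card G * ∑ k, (classSum G (x k) * P).coeff (x k) := by
  have hclass : ∀ c r, ∑ s, P.coeff (s⁻¹ * (c * r * c⁻¹)⁻¹ * s * (c * r * c⁻¹)) =
      ∑ s, P.coeff (s⁻¹ * r⁻¹ * s * r) := fun c r => by
    refine Fintype.sum_equiv (MulAut.conj c⁻¹).toEquiv _ _ fun s => ?_
    rw [← mem_center_iff_coeff_conj.mp hP c⁻¹]
    simp only [MulEquiv.toEquiv_eq_coe, MulEquiv.coe_toEquiv, MulAut.conj_apply]
    group
  rw [sum_eq_sum_card_smul_of_conj hdist hexh _ hclass, mul_sum]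
  simp only [nsmul_eq_mul, card_isConj_mul_sum_coeff_commutator]

theorem natCard_commutator_eq_card_mul_trace {n : ℕ} {x : Fin n → G}
    (hdist : ∀ i j, i ≠ j → ¬ IsConj (x i) (x j)) (hexh : ∀ g, ∃ i, IsConj (x i) g)
    {a : Fin n → Fin n → Fin n → ℂ}
    (ha : ∀ i j, classSum G (x i) * classSum G (x j) = ∑ l, a l i j • classSum G (x l))
    {r : ℕ} (i : Fin r → Fin n) :
    (Nat.card {t : G × G × (Fin r → G) // (∀ j, IsConj (x (i j)) (t.2.2 j)) ∧
        t.2.1⁻¹ * t.1⁻¹ * t.2.1 * t.1 = (List.ofFn t.2.2).prod} : ℂ) =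
      Fintype.card G * (List.ofFn fun t => Matrix.of fun k l => a k l (i t)).prod.trace := by
  have hcenter : ∀ k, classSum G (x k) ∈ Subsemiring.center (MonoidAlgebra ℂ G) :=
    fun k => classSum_mem_center (x k)
  have hP : (List.ofFn fun t => classSum G (x (i t))).prod ∈
      Subsemiring.center (MonoidAlgebra ℂ G) :=
    Subsemiring.list_prod_mem _ fun _ hz => by
      obtain ⟨t, rfl⟩ := List.mem_ofFn.mp hz
      exact hcenter (i t)
  rw [natCard_commutator_eq_sum_coeff, sum_sum_coeff_commutator hdist hexh hP, Matrix.trace]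
  congr 1
  refine sum_congr rfl fun k _ => ?_
  rw [Subsemiring.mem_center_iff.mp hP, list_prod_ofFn_mul_eq_sum_smul
    (e := fun j => classSum G (x j)) (fun i j => (Subsemiring.mem_center_iff.mp (hcenter i) _).symm)
    ha, coeff_sum_smul_classSum hdist, Matrix.diag_apply]

end ClassSum

namespace FDRep
variable {G : Type} [Group G]

theorem nontrivial_of_simple (V : FDRep ℂ G) [Simple V] : Nontrivial V := by
  by_contra h
  rw [not_nontrivial_iff_subsingleton] at h
  exact id_nonzero V (Action.Hom.ext (by ext v; exact Subsingleton.elim _ _))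

theorem character_one_ne_zero (V : FDRep ℂ G) [Simple V] : V.character 1 ≠ 0 := by
  have := nontrivial_of_simple V
  rw [char_one, Nat.cast_ne_zero]
  exact Module.finrank_pos.ne'

theorem sum_character_mul_character_inv [Fintype G] (V W : FDRep ℂ G) [Simple V] [Simple W] :
    ∑ g, V.character g * W.character g⁻¹ =
      if Nonempty (V ≅ W) then (Fintype.card G : ℂ) else 0 := by
  have hG : (Nat.card G : ℂ) ≠ 0 := Nat.cast_ne_zero.mpr Nat.card_pos.ne'
  rw [← mul_inv_cancel_left₀ hG (∑ g, _), char_orthonormal, Nat.card_eq_fintype_card]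
  split_ifs <;> simp

theorem asAlgebraHom_eq_smul_one_of_mem_center (V : FDRep ℂ G) [Simple V]
    {z : MonoidAlgebra ℂ G} (hz : z ∈ Subsemiring.center (MonoidAlgebra ℂ G)) :
    ∃ c : ℂ, Representation.asAlgebraHom V.ρ z = c • 1 := by
  let f : V ⟶ V := Action.Hom.mk (ConcreteCategory.ofHom (Representation.asAlgebraHom V.ρ z))
    fun g => by
      have hg := congrArg (Representation.asAlgebraHom V.ρ)
        (Subsemiring.mem_center_iff.mp hz (MonoidAlgebra.single g 1))
      rw [map_mul, map_mul, Representation.asAlgebraHom_single_one] at hg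
      ext v
      exact (LinearMap.congr_fun hg v).symm
  obtain ⟨c, hc⟩ := endomorphism_simple_eq_smul_id ℂ f
  exact ⟨c, (congrArg (fun φ : V ⟶ V => φ.hom.hom.hom) hc).symm⟩

end FDRep

section CentralCharacter
variable {G : Type} [Group G] [Fintype G]

theorem trace_asAlgebraHom_classSum (V : FDRep ℂ G) (g : G) :
    LinearMap.trace ℂ V (Representation.asAlgebraHom V.ρ (classSum G g)) =
      Nat.card {y // IsConj g y} * V.character g := by
  rw [classSum_eq_sum_filter, map_sum, map_sum, sum_congr rfl fun t ht => ?_, sum_const,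
    nsmul_eq_mul, Nat.card_eq_fintype_card, Fintype.card_subtype]
  obtain ⟨c, rfl⟩ := isConj_iff.mp (mem_filter.mp ht).2
  rw [Representation.asAlgebraHom_single_one]
  exact FDRep.char_conj V g c

/-- For simple `V`, the scalar by which the class sum of `g` acts on `V`. -/
noncomputable def centralChar (V : FDRep ℂ G) (g : G) : ℂ :=
  Nat.card {y // IsConj g y} * V.character g / V.character 1

theorem asAlgebraHom_classSum (V : FDRep ℂ G) [Simple V] (g : G) :
    Representation.asAlgebraHom V.ρ (classSum G g) = centralChar V g • 1 := by
  obtain ⟨c, hc⟩ := FDRep.asAlgebraHom_eq_smul_one_of_mem_center V (classSum_mem_center g)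
  have htr := trace_asAlgebraHom_classSum V g
  rw [hc, map_smul, LinearMap.trace_one, smul_eq_mul, ← FDRep.char_one] at htr
  rw [hc, centralChar, ← htr, mul_div_cancel_right₀ _ (FDRep.character_one_ne_zero V)]

theorem centralChar_mul_centralChar (V : FDRep ℂ G) [Simple V] {n : ℕ} {x : Fin n → G}
    {a : Fin n → Fin n → Fin n → ℂ}
    (ha : ∀ i j, classSum G (x i) * classSum G (x j) = ∑ l, a l i j • classSum G (x l))
    (i j : Fin n) :
    centralChar V (x i) * centralChar V (x j) = ∑ l, a l i j * centralChar V (x l) := by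
  have := FDRep.nontrivial_of_simple V
  have h := congrArg (Representation.asAlgebraHom V.ρ) (ha i j)
  simp only [map_mul, map_sum, map_smul, asAlgebraHom_classSum, smul_smul, ← sum_smul,
    smul_mul_smul, one_mul] at h
  exact smul_left_injective ℂ one_ne_zero h

end CentralCharacter

section CentralCharacterMatrix
variable {G : Type} [Group G] [Fintype G] {n : ℕ}

noncomputable def centralCharMatrix (V : Fin n → FDRep ℂ G) (x : Fin n → G) :
    Matrix (Fin n) (Fin n) ℂ :=
  .of fun l k => centralChar (V l) (x k)

theorem centralCharMatrix_semiconjBy {V : Fin n → FDRep ℂ G} (hsimple : ∀ l, Simple (V l))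
    {x : Fin n → G} {a : Fin n → Fin n → Fin n → ℂ}
    (ha : ∀ i j, classSum G (x i) * classSum G (x j) = ∑ l, a l i j • classSum G (x l))
    (j : Fin n) :
    SemiconjBy (centralCharMatrix V x) (.of fun p q => a p q j)
      (.diagonal fun l => centralChar (V l) (x j)) := by
  ext l k
  have := hsimple l
  rw [Matrix.diagonal_mul, Matrix.mul_apply]
  simp only [centralCharMatrix, Matrix.of_apply]
  rw [mul_comm, centralChar_mul_centralChar (V l) ha k j]
  exact sum_congr rfl fun m _ => mul_comm _ _

/-- Row orthogonality of the irreducible characters. -/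
theorem centralCharMatrix_mul (V : Fin n → FDRep ℂ G) (hsimple : ∀ l, Simple (V l))
    (hnoniso : ∀ l m, l ≠ m → ¬ Nonempty (V l ≅ V m)) {x : Fin n → G}
    (hdist : ∀ i j, i ≠ j → ¬ IsConj (x i) (x j)) (hexh : ∀ g, ∃ i, IsConj (x i) g) :
    centralCharMatrix V x * .of (fun k m => (V m).character (x k)⁻¹ * (V m).character 1) =
      (Fintype.card G : ℂ) • 1 := by
  ext l m
  have := hsimple l
  have := hsimple m
  set f : G → ℂ := fun g =>
    (V l).character g * (V m).character g⁻¹ * ((V m).character 1 / (V l).character 1) with hf_def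
  have hf : ∀ c g, f (c * g * c⁻¹) = f g := fun c g => by
    simp only [hf_def, show (c * g * c⁻¹)⁻¹ = c * g⁻¹ * c⁻¹ by group, FDRep.char_conj]
  calc _ = ∑ k, Nat.card {y // IsConj (x k) y} • f (x k) := by
        rw [Matrix.mul_apply]
        refine sum_congr rfl fun k _ => ?_
        simp only [centralCharMatrix, centralChar, Matrix.of_apply, nsmul_eq_mul, hf_def]
        ring
    _ = (∑ g, (V l).character g * (V m).character g⁻¹) *
          ((V m).character 1 / (V l).character 1) := by
        rw [← sum_eq_sum_card_smul_of_conj hdist hexh f hf, sum_mul]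
    _ = ((Fintype.card G : ℂ) • (1 : Matrix (Fin n) (Fin n) ℂ)) l m := by
        rw [FDRep.sum_character_mul_character_inv, Matrix.smul_apply, Matrix.one_apply]
        by_cases h : l = m
        · subst h
          rw [if_pos ⟨Iso.refl _⟩, if_pos rfl, div_self (FDRep.character_one_ne_zero _), mul_one,
            smul_eq_mul, mul_one]
        · simp [hnoniso l m h, h]

theorem isUnit_centralCharMatrix (V : Fin n → FDRep ℂ G) (hsimple : ∀ l, Simple (V l))
    (hnoniso : ∀ l m, l ≠ m → ¬ Nonempty (V l ≅ V m)) {x : Fin n → G}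
    (hdist : ∀ i j, i ≠ j → ¬ IsConj (x i) (x j)) (hexh : ∀ g, ∃ i, IsConj (x i) g) :
    IsUnit (centralCharMatrix V x) := by
  have hG : (Fintype.card G : ℂ) ≠ 0 := Nat.cast_ne_zero.mpr Fintype.card_ne_zero
  refine (Matrix.isUnit_iff_isUnit_det _).mpr (Matrix.isUnit_det_of_right_inverse (B :=
    (Fintype.card G : ℂ)⁻¹ • .of fun k m => (V m).character (x k)⁻¹ * (V m).character 1) ?_)
  rw [Matrix.mul_smul, centralCharMatrix_mul V hsimple hnoniso hdist hexh, smul_smul,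
    inv_mul_cancel₀ hG, one_smul]

theorem trace_prod_structureMatrix_eq_sum_prod_centralChar {V : Fin n → FDRep ℂ G}
    (hsimple : ∀ l, Simple (V l)) (hnoniso : ∀ l m, l ≠ m → ¬ Nonempty (V l ≅ V m)) {x : Fin n → G}
    (hdist : ∀ i j, i ≠ j → ¬ IsConj (x i) (x j)) (hexh : ∀ g, ∃ i, IsConj (x i) g)
    {a : Fin n → Fin n → Fin n → ℂ}
    (ha : ∀ i j, classSum G (x i) * classSum G (x j) = ∑ l, a l i j • classSum G (x l))
    {r : ℕ} (i : Fin r → Fin n) :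
    (List.ofFn fun t => Matrix.of fun k l => a k l (i t)).prod.trace =
      ∑ l, ∏ t, centralChar (V l) (x (i t)) := by
  rw [Matrix.trace_eq_of_semiconjBy (isUnit_centralCharMatrix V hsimple hnoniso hdist hexh)
    (SemiconjBy.list_prod_ofFn fun t => centralCharMatrix_semiconjBy hsimple ha (i t)),
    Matrix.list_prod_ofFn_diagonal, Matrix.trace_diagonal]

end CentralCharacterMatrix

theorem generalized_commutator_count_general (G : Type) [Group G] [Fintype G]
    {n : ℕ} (x : Fin n → G)
    (hdist : ∀ i j, i ≠ j → ¬ IsConj (x i) (x j))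
    (hexh : ∀ g : G, ∃ i, IsConj (x i) g)
    (V : Fin n → FDRep ℂ G)
    (hsimple : ∀ l, CategoryTheory.Simple (V l))
    (hnoniso : ∀ l m, l ≠ m → ¬ Nonempty (V l ≅ V m))
    (a : Fin n → Fin n → Fin n → ℂ)
    (ha : ∀ i j, classSum G (x i) * classSum G (x j) =
      ∑ l : Fin n, a l i j • classSum G (x l))
    (A : Fin n → Matrix (Fin n) (Fin n) ℂ)
    (hA : ∀ j, A j = Matrix.of fun k l => a k l j)
    {r : ℕ} (i : Fin r → Fin n) :
    ((Nat.card {t : G × G × (Fin r → G) //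
        (∀ j, IsConj (x (i j)) (t.2.2 j)) ∧
          t.2.1⁻¹ * t.1⁻¹ * t.2.1 * t.1 = (List.ofFn t.2.2).prod} : ℂ) =
      (Fintype.card G : ℂ) *
        ∑ l : Fin n, ∏ t : Fin r,
          ((Nat.card {y : G // IsConj (x (i t)) y} : ℂ) *
            (V l).character (x (i t)) / (V l).character 1)) ∧
    ((Nat.card {t : G × G × (Fin r → G) //
        (∀ j, IsConj (x (i j)) (t.2.2 j)) ∧
          t.2.1⁻¹ * t.1⁻¹ * t.2.1 * t.1 = (List.ofFn t.2.2).prod} : ℂ) =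
      (Fintype.card G : ℂ) * Matrix.trace (List.ofFn (fun t => A (i t))).prod) := by
  obtain rfl : A = fun j => Matrix.of fun k l => a k l j := funext hA
  rw [natCard_commutator_eq_card_mul_trace hdist hexh ha i,
    trace_prod_structureMatrix_eq_sum_prod_centralChar hsimple hnoniso hdist hexh ha i]
  exact ⟨rfl, rfl⟩

/-- the number `p_{i₁,…,i_r}` of tuples `(r,s,g_{i₁},…,g_{i_r})` with
`s⁻¹r⁻¹sr = g_{i₁}⋯g_{i_r}` (each `g_{i_t}` in the class `C_{i_t}`) equals
`|G| · ∑_l ∏_t (ℓ_{i_t} χ_l(g_{i_t})/χ_l(1))`, which is `|G| · Tr(A_{i₁}⋯A_{i_r})` for the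
structure-constant matrices `A_j` of the class sums. -/
theorem generalized_commutator_count (G : Type) [Group G] [Fintype G]
    {n : ℕ} (x : Fin n → G)
    (hdist : ∀ i j, i ≠ j → ¬ IsConj (x i) (x j))
    (hexh : ∀ g : G, ∃ i, IsConj (x i) g)
    (V : Fin n → FDRep ℂ G)
    (hsimple : ∀ l, CategoryTheory.Simple (V l))
    (hnoniso : ∀ l m, l ≠ m → ¬ Nonempty (V l ≅ V m))
    (hcomplete : ∀ W : FDRep ℂ G, CategoryTheory.Simple W → ∃ l, Nonempty (W ≅ V l))
    (a : Fin n → Fin n → Fin n → ℂ)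
    (ha : ∀ i j, classSum G (x i) * classSum G (x j) =
      ∑ l : Fin n, a l i j • classSum G (x l))
    (A : Fin n → Matrix (Fin n) (Fin n) ℂ)
    (hA : ∀ j, A j = Matrix.of fun k l => a k l j)
    {r : ℕ} (i : Fin r → Fin n) :
    ((Nat.card {t : G × G × (Fin r → G) //
        (∀ j, IsConj (x (i j)) (t.2.2 j)) ∧
          t.2.1⁻¹ * t.1⁻¹ * t.2.1 * t.1 = (List.ofFn t.2.2).prod} : ℂ) =
      (Fintype.card G : ℂ) *
        ∑ l : Fin n, ∏ t : Fin r,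
          ((Nat.card {y : G // IsConj (x (i t)) y} : ℂ) *
            (V l).character (x (i t)) / (V l).character 1)) ∧
    ((Nat.card {t : G × G × (Fin r → G) //
        (∀ j, IsConj (x (i j)) (t.2.2 j)) ∧
          t.2.1⁻¹ * t.1⁻¹ * t.2.1 * t.1 = (List.ofFn t.2.2).prod} : ℂ) =
      (Fintype.card G : ℂ) * Matrix.trace (List.ofFn (fun t => A (i t))).prod) :=
  generalized_commutator_count_general G x hdist hexh V hsimple hnoniso a ha A hA i
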